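/- Let β = 3 and let the digital sets be D₁ = D₂ = {(0), (2,2)} (coming from the IFS {g₁(x) = x/3, g₂(x) = (x+8)/9}, where the map g₂ is represented by the block (2,2) since 8/9 = 2/3 + 2/9). Then the set of primitive Matchings generated by D₁ and D₂ is exactly { (0), (2,2), (4,4) } ∪ { (2,4,4,…,4,2) : the block has j ≥ 1 middle entries equal to 4 }. -/

import Mathlib

open Finset Pointwise

/-- The block `(0,…,0, β^k * a)` of length `k` associated to the similitude
`x ↦ x/β^k + a`. -/
noncomputable def digitBlock (β : ℝ) (k : ℕ) (a : ℝ) : List ℝ :=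
  List.replicate (k - 1) 0 ++ [β ^ k * a]

/-- `w` is a Matching generated by the digital sets `P` and `Q`: it is the coordinatewise
sum of a concatenation of blocks from `P` and a concatenation of blocks from `Q`
having the same total length as `w`. -/
def IsMatching {n m : ℕ} (P : Fin n → List ℝ) (Q : Fin m → List ℝ) (w : List ℝ) : Prop :=
  ∃ (is : List (Fin n)) (js : List (Fin m)),
    is ≠ [] ∧ js ≠ [] ∧
    (is.map P).flatten.length = w.length ∧
    (js.map Q).flatten.length = w.length ∧
    w = List.zipWith (· + ·) (is.map P).flatten (js.map Q).flatten

/-- A Matching is primitive if it is not a concatenation of two or more shorter Matchings. -/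
def IsPrimMatching {n m : ℕ} (P : Fin n → List ℝ) (Q : Fin m → List ℝ) (w : List ℝ) : Prop :=
  IsMatching P Q w ∧
    ¬ ∃ u v : List ℝ, u ≠ [] ∧ v ≠ [] ∧ IsMatching P Q u ∧ IsMatching P Q v ∧ w = u ++ v

/-- The value `Σ_{i=1}^{L} c_i β^{-i}` of the block `w = (c_1,…,c_L)` in base `β`. -/
noncomputable def blockVal (β : ℝ) (w : List ℝ) : ℝ :=
  ∑ i : Fin w.length, w.get i / β ^ (i.1 + 1)

/-- The similitude `φ_w(x) = x/β^{|w|} + Σ_i c_i β^{-i}` associated to a block `w`. -/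
noncomputable def phiBlock (β : ℝ) (w : List ℝ) (x : ℝ) : ℝ :=
  x / β ^ w.length + blockVal β w

/-- `x : ℕ → ℝ` (indexed from 0, representing `(x_k)_{k ≥ 1}`) is the infinite
concatenation of the nonempty blocks `W 0, W 1, …`. -/
def IsConcatSeq (W : ℕ → List ℝ) (x : ℕ → ℝ) : Prop :=
  (∀ t, W t ≠ []) ∧
    ∀ (t : ℕ) (i : Fin (W t).length),
      x ((∑ s ∈ Finset.range t, (W s).length) + i) = (W t).get i

/-- `x` is an infinite concatenation of blocks from the family `Ws`. -/
def IsInfConcatFrom (Ws : Set (List ℝ)) (x : ℕ → ℝ) : Prop :=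
  ∃ W : ℕ → List ℝ, (∀ t, W t ∈ Ws) ∧ IsConcatSeq W x

/-- The value `Σ_{k=1}^{∞} x_k β^{-k}` of a sequence (indexed from 0). -/
noncomputable def seqVal (β : ℝ) (x : ℕ → ℝ) : ℝ :=
  ∑' k : ℕ, x k / β ^ (k + 1)

/-- The set `E` of values of infinite concatenations of Matchings. -/
def Eset {n m : ℕ} (β : ℝ) (P : Fin n → List ℝ) (Q : Fin m → List ℝ) : Set ℝ :=
  {z | ∃ x : ℕ → ℝ, IsInfConcatFrom {w | IsMatching P Q w} x ∧ z = seqVal β x}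

/-- `a` is a coding: the coordinatewise sum of an infinite concatenation of blocks from
`P` and an infinite concatenation of blocks from `Q`. -/
def IsCoding {n m : ℕ} (P : Fin n → List ℝ) (Q : Fin m → List ℝ) (a : ℕ → ℝ) : Prop :=
  ∃ x y : ℕ → ℝ, IsInfConcatFrom (Set.range P) x ∧ IsInfConcatFrom (Set.range Q) y ∧
    ∀ k, a k = x k + y k

/-- The set `C` of codings having a tail containing no segment that is a Matching. -/
def Cset {n m : ℕ} (P : Fin n → List ℝ) (Q : Fin m → List ℝ) : Set (ℕ → ℝ) :=
  {a | IsCoding P Q a ∧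
    ∃ N : ℕ, ∀ j ≥ N, ∀ l : ℕ, 1 ≤ l →
      ¬ IsMatching P Q (List.ofFn fun i : Fin l => a (j + i))}

/-!
A Matching is a sum `x + y` of two equally long words tiled by the blocks `(0)` and `(2,2)`.
Read both tilings from the left. Where both are cut at the same position, the sum continues
with `(0)` (two `(0)` tiles), with `(4,4)` (two `(2,2)` tiles), or with a staggered stretch:
one tiling is always inside a `(2,2)` where the other is cut, so the stretch reads
`2, 4, …, 4` until a `(0)` restores the alignment and closes it with a `2`. Hence every
Matching is a concatenation of the pieces `(0)`, `(4,4)`, `(2,4,…,4,2)`. A piece is primitive: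
its proper nonempty prefixes are `(4)`, while the only Matching of length one is `(0)`, and
`(2,4,…,4)`, whose sum is `2 mod 4`, while every block, hence every Matching, has sum `0 mod 4`.
-/

theorem List.sum_zipWith_add {M : Type*} [AddCommMonoid M] :
    ∀ {l₁ l₂ : List M}, l₁.length = l₂.length →
      (List.zipWith (· + ·) l₁ l₂).sum = l₁.sum + l₂.sum
  | [], [], _ => by simp
  | a :: l₁, b :: l₂, h => by
    simp [List.sum_zipWith_add (l₁ := l₁) (l₂ := l₂) (by simpa using h), add_add_add_comm]

theorem IsMatching.append {n m : ℕ} {P : Fin n → List ℝ} {Q : Fin m → List ℝ} {u v : List ℝ}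
    (hu : IsMatching P Q u) (hv : IsMatching P Q v) : IsMatching P Q (u ++ v) := by
  obtain ⟨is, js, his, hjs, hisu, hjsu, rfl⟩ := hu
  obtain ⟨is', js', -, -, hisv, hjsv, rfl⟩ := hv
  refine ⟨is ++ is', js ++ js', by simp [his], by simp [hjs], ?_, ?_, ?_⟩
  · simp only [List.map_append, List.flatten_append, List.length_append, hisu, hisv]
  · simp only [List.map_append, List.flatten_append, List.length_append, hjsu, hjsv]
  · simp only [List.map_append, List.flatten_append]
    exact (List.zipWith_append (hisu.trans hjsu.symm)).symm

namespace ZeroTwoTwo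

abbrev D : Fin 2 → List ℝ := ![[0], [2, 2]]

inductive Tiled : List ℝ → Prop
  | nil : Tiled []
  | zero {x : List ℝ} : Tiled x → Tiled (0 :: x)
  | two {x : List ℝ} : Tiled x → Tiled (2 :: 2 :: x)

theorem tiled_flatten (is : List (Fin 2)) : Tiled (is.map D).flatten := by
  induction is with
  | nil => exact .nil
  | cons i is ih => fin_cases i; exacts [ih.zero, ih.two]

theorem Tiled.exists_flatten {x : List ℝ} (hx : Tiled x) :
    ∃ is : List (Fin 2), (is.map D).flatten = x := by
  induction hx with
  | nil => exact ⟨[], rfl⟩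
  | zero _ ih => obtain ⟨is, rfl⟩ := ih; exact ⟨0 :: is, rfl⟩
  | two _ ih => obtain ⟨is, rfl⟩ := ih; exact ⟨1 :: is, rfl⟩

theorem isMatching_iff {w : List ℝ} :
    IsMatching D D w ↔ ∃ x y : List ℝ, Tiled x ∧ Tiled y ∧ x ≠ [] ∧ x.length = y.length ∧
      w = List.zipWith (· + ·) x y := by
  constructor
  · rintro ⟨is, js, his, -, hisw, hjsw, rfl⟩
    refine ⟨_, _, tiled_flatten is, tiled_flatten js, ?_, hisw.trans hjsw.symm, rfl⟩
    obtain ⟨i, is, rfl⟩ := List.exists_cons_of_ne_nil his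
    fin_cases i <;> simp
  · rintro ⟨x, y, hx, hy, hx0, hxy, rfl⟩
    obtain ⟨is, rfl⟩ := hx.exists_flatten
    obtain ⟨js, rfl⟩ := hy.exists_flatten
    refine ⟨is, js, ?_, ?_, by simp [hxy], by simp [hxy], rfl⟩
    · rintro rfl; exact hx0 rfl
    · rintro rfl; exact hx0 (List.eq_nil_of_length_eq_zero hxy)

theorem Tiled.sum_eq {x : List ℝ} (hx : Tiled x) : ∃ n : ℕ, x.sum = 4 * n := by
  induction hx with
  | nil => exact ⟨0, by simp⟩
  | zero _ ih => simpa using ih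
  | two _ ih => obtain ⟨n, hn⟩ := ih; exact ⟨n + 1, by simp [hn]; ring⟩

theorem Tiled.eq_of_length_eq_one {x : List ℝ} (hx : Tiled x) (h : x.length = 1) : x = [0] := by
  rcases hx with _ | hx | _
  · simp at h
  · cases hx <;> simp_all
  · simp at h

theorem IsMatching.sum_eq {w : List ℝ} (hw : IsMatching D D w) : ∃ n : ℕ, w.sum = 4 * n := by
  obtain ⟨x, y, hx, hy, -, hxy, rfl⟩ := isMatching_iff.1 hw
  obtain ⟨m, hm⟩ := hx.sum_eq
  obtain ⟨n, hn⟩ := hy.sum_eq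
  exact ⟨m + n, by rw [List.sum_zipWith_add hxy, hm, hn]; push_cast; ring⟩

theorem IsMatching.ne_nil {w : List ℝ} (hw : IsMatching D D w) : w ≠ [] := by
  obtain ⟨x, y, -, -, hx₀, hxy, rfl⟩ := isMatching_iff.1 hw
  simpa [← List.length_eq_zero_iff, hxy] using hx₀

theorem IsMatching.eq_of_length_eq_one {w : List ℝ} (hw : IsMatching D D w)
    (h : w.length = 1) : w = [0] := by
  obtain ⟨x, y, hx, hy, -, hxy, rfl⟩ := isMatching_iff.1 hw
  have hx1 : x.length = 1 := by simpa [hxy] using h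
  rw [hx.eq_of_length_eq_one hx1, hy.eq_of_length_eq_one (hxy ▸ hx1)]
  norm_num

inductive Piece : List ℝ → Prop
  | zero : Piece [0]
  | four : Piece [4, 4]
  | bridge (a : ℕ) : Piece ([2] ++ List.replicate a 4 ++ [2])

inductive PieceConcat : List ℝ → Prop
  | nil : PieceConcat []
  | append {u v : List ℝ} : Piece u → PieceConcat v → PieceConcat (u ++ v)

mutual

theorem pieceConcat_zipWith {x y : List ℝ} (hx : Tiled x) (hy : Tiled y)
    (hxy : x.length = y.length) : PieceConcat (List.zipWith (· + ·) x y) := by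
  cases hx with
  | nil => exact .nil
  | zero hx =>
    cases hy with
    | nil => simp at hxy
    | zero hy =>
      simpa using (pieceConcat_zipWith hx hy (by simpa using hxy)).append .zero
    | two hy =>
      obtain ⟨a, r, hr, hxy'⟩ := exists_zipWith_cons_two hx hy (by simpa using hxy)
      simpa [hxy'] using hr.append (.bridge a)
  | two hx =>
    cases hy with
    | nil => simp at hxy
    | zero hy =>
      obtain ⟨a, r, hr, hyx⟩ := exists_zipWith_cons_two hy hx (by simp at hxy; omega)
      rw [List.zipWith_cons_cons, List.zipWith_comm_of_comm add_comm, hyx]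
      simpa using hr.append (.bridge a)
    | two hy =>
      have := (pieceConcat_zipWith hx hy (by simpa using hxy)).append .four
      norm_num at this ⊢
      exact this
termination_by x.length + y.length

/- The offset state: the second tiling `2 :: y` is cut in the middle of a `(2,2)` block. -/
theorem exists_zipWith_cons_two {x y : List ℝ} (hx : Tiled x) (hy : Tiled y)
    (hxy : x.length = y.length + 1) : ∃ (a : ℕ) (r : List ℝ), PieceConcat r ∧
      List.zipWith (· + ·) x (2 :: y) = List.replicate a 4 ++ [2] ++ r := by
  cases hx with
  | nil => simp at hxy
  | zero hx =>
    exact ⟨0, _, pieceConcat_zipWith hx hy (by simpa using hxy), by simp⟩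
  | two hx =>
    obtain ⟨a, r, hr, hyx⟩ := exists_zipWith_cons_two hy hx (by simp at hxy; omega)
    refine ⟨a + 1, r, hr, ?_⟩
    rw [List.zipWith_cons_cons, List.zipWith_comm_of_comm add_comm, hyx]
    norm_num [List.replicate_succ]
termination_by x.length + y.length

end

theorem pieceConcat_of_isMatching {w : List ℝ} (hw : IsMatching D D w) : PieceConcat w := by
  obtain ⟨x, y, hx, hy, -, hxy, rfl⟩ := isMatching_iff.1 hw
  exact pieceConcat_zipWith hx hy hxy

theorem exists_tiled_zipWith_cons_two_eq (a : ℕ) : ∃ x y : List ℝ, Tiled x ∧ Tiled y ∧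
    x.length = y.length + 1 ∧ List.zipWith (· + ·) x (2 :: y) = List.replicate a 4 ++ [2] := by
  induction a with
  | zero => exact ⟨[0], [], Tiled.nil.zero, .nil, rfl, by norm_num⟩
  | succ a ih =>
    obtain ⟨x, y, hx, hy, hxy, h⟩ := ih
    refine ⟨2 :: 2 :: y, x, hy.two, hx, by simp [hxy], ?_⟩
    rw [List.zipWith_cons_cons, List.zipWith_comm_of_comm add_comm, h]
    norm_num [List.replicate_succ]

theorem Piece.isMatching {w : List ℝ} (hw : Piece w) : IsMatching D D w := by
  refine isMatching_iff.2 ?_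
  cases hw with
  | zero => exact ⟨[0], [0], Tiled.nil.zero, Tiled.nil.zero, by simp, rfl, by norm_num⟩
  | four => exact ⟨[2, 2], [2, 2], Tiled.nil.two, Tiled.nil.two, by simp, rfl, by norm_num⟩
  | bridge a =>
    obtain ⟨x, y, hx, hy, hxy, h⟩ := exists_tiled_zipWith_cons_two_eq a
    refine ⟨2 :: 2 :: y, 0 :: x, hy.two, hx.zero, by simp, by simp [hxy], ?_⟩
    rw [List.zipWith_cons_cons, List.zipWith_comm_of_comm add_comm, h]
    norm_num

theorem Piece.ne_nil {w : List ℝ} (hw : Piece w) : w ≠ [] := by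
  cases hw <;> simp

theorem PieceConcat.isMatching {w : List ℝ} (hw : PieceConcat w) (hw₀ : w ≠ []) :
    IsMatching D D w := by
  induction hw with
  | nil => exact absurd rfl hw₀
  | @append u v hu _ ih =>
    rcases eq_or_ne v [] with rfl | hv₀
    · simpa using hu.isMatching
    · exact hu.isMatching.append (ih hv₀)

theorem not_isMatching_two_cons_replicate (k : ℕ) :
    ¬ IsMatching D D (2 :: List.replicate k 4) := by
  intro h
  obtain ⟨n, hn⟩ := IsMatching.sum_eq h
  have : 2 + k * 4 = 4 * n := by exact_mod_cast (by simpa using hn : (2 : ℝ) + k * 4 = 4 * n)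
  omega

theorem exists_eq_two_cons_replicate {a : ℕ} {u v : List ℝ}
    (h : u ++ v = [2] ++ List.replicate a 4 ++ [2]) (hu : u ≠ []) (hv : v ≠ []) :
    ∃ k, u = 2 :: List.replicate k 4 := by
  have hlen : u.length ≤ ([2] ++ List.replicate a (4 : ℝ)).length := by
    have := congrArg List.length h
    have := List.length_pos_iff.2 hv
    simp only [List.length_append, List.length_singleton, List.length_replicate] at *
    omega
  obtain ⟨k, hk⟩ := Nat.exists_eq_succ_of_ne_zero (List.length_pos_iff.2 hu).ne'
  refine ⟨min k a, ?_⟩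
  rw [List.prefix_iff_eq_take.1 ⟨v, h⟩, List.take_append_of_le_length hlen, hk]
  simp [List.take_replicate]

theorem Piece.not_isMatching_of_append_eq {w u v : List ℝ} (hw : Piece w) (h : u ++ v = w)
    (hu : u ≠ []) (hv : v ≠ []) : ¬ IsMatching D D u := by
  have hlen := congrArg List.length h
  have := List.length_pos_iff.2 hu
  have := List.length_pos_iff.2 hv
  cases hw with
  | zero => simp at hlen; omega
  | four =>
    intro hu'
    have hu₁ : u.length = 1 := by simp at hlen; omega
    have := IsMatching.eq_of_length_eq_one hu' hu₁
    subst this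
    simp at h
  | bridge a =>
    obtain ⟨k, rfl⟩ := exists_eq_two_cons_replicate h hu hv
    exact not_isMatching_two_cons_replicate k

theorem isPrimMatching_iff_piece {w : List ℝ} : IsPrimMatching D D w ↔ Piece w := by
  constructor
  · rintro ⟨hw, hprim⟩
    rcases pieceConcat_of_isMatching hw with _ | @⟨u, v, hu, hv⟩
    · exact absurd rfl (IsMatching.ne_nil hw)
    · rcases eq_or_ne v [] with rfl | hv₀
      · simpa using hu
      · exact absurd ⟨u, v, hu.ne_nil, hv₀, hu.isMatching, hv.isMatching hv₀, rfl⟩ hprim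
  · intro hw
    refine ⟨hw.isMatching, ?_⟩
    rintro ⟨u, v, hu, hv, hmu, -, rfl⟩
    exact hw.not_isMatching_of_append_eq rfl hu hv hmu

theorem piece_iff {w : List ℝ} : Piece w ↔ w ∈ ({[(0 : ℝ)], [2, 2], [4, 4]} : Set (List ℝ)) ∪
      {w : List ℝ | ∃ j : ℕ, 1 ≤ j ∧ w = [(2 : ℝ)] ++ List.replicate j (4 : ℝ) ++ [(2 : ℝ)]} := by
  constructor
  · rintro (_ | _ | (_ | j))
    · simp
    · simp
    · simp
    · exact Or.inr ⟨j + 1, by omega, rfl⟩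
  · rintro ((rfl | rfl | rfl) | ⟨j, -, rfl⟩)
    · exact .zero
    · exact .bridge 0
    · exact .four
    · exact .bridge j

end ZeroTwoTwo

/-- for `D₁ = D₂ = {(0), (2,2)}` the set of primitive Matchings is exactly
`{(0), (2,2), (4,4)} ∪ {(2,4,…,4,2) : j ≥ 1 middle entries equal to 4}`. -/
theorem statement18 :
    {w : List ℝ | IsPrimMatching ![[(0 : ℝ)], [2, 2]] ![[(0 : ℝ)], [2, 2]] w} =
      ({[(0 : ℝ)], [2, 2], [4, 4]} : Set (List ℝ)) ∪
      {w : List ℝ | ∃ j : ℕ, 1 ≤ j ∧ w = [(2 : ℝ)] ++ List.replicate j (4 : ℝ) ++ [(2 : ℝ)]} := by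
  ext w
  exact ZeroTwoTwo.isPrimMatching_iff_piece.trans ZeroTwoTwo.piece_iff
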